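/- Let T > 0, n ∈ ℕ, σ ∈ ℕ, U ⊆ {0,1}ⁿ, and p ∈ [1,∞). Let D := D_max^Σ(U) be the set of all u ∈ L^p((0,T);ℝⁿ) having a representative v with v(t) ∈ U for all t ∈ (0,T) and Σ_{j=1}^n Var(v_j;(0,T)) ≤ σ (pointwise total variation). Let I₁,…,I_M be pairwise disjoint nonempty bounded open subintervals of (0,T), let j₁,…,j_M ∈ {1,…,n}, and define Π : L^p((0,T);ℝⁿ) → ℝ^M by Π(u)_i = (1/λ(I_i)) ∫_{I_i} u_{j_i} dλ. Define K := {Π(u) : u ∈ D such that for every i = 1,…,M there exists w_i ∈ U with u = w_i almost everywhere on I_i}. Then C_{D,Π} := conv{Π(u) : u ∈ D} = conv(K); in particular, since K ⊆ {0,1}^M is finite, C_{D,Π} is a 0/1-polytope in ℝ^M. -/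

import Mathlib

/-
Parametrize every `I_i` affinely by `θ ∈ (0,1)`. For fixed `θ`, collapsing each `I_i` onto its
point at relative position `θ` is a monotone self-map of `(0,T)`, so composing a feasible
representative `v` of `u` with it keeps the variation at most `σ` and yields a control that is
constant on every `I_i`, whose projection is the vector `(v (a_i + (b_i - a_i) θ))_{j_i}`.
By the affine change of variables, `Π(u)` is the integral over `θ ∈ (0,1)` of these vectors:
the mean of a probability measure carried by the finite set `K ⊆ {0,1}^M`, hence a point
of `conv K`.
-/

open MeasureTheory Set Filter
open scoped ENNReal

/-- The set `D_max^Σ(U)` of controls with a representative taking values in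
`U ⊆ {0,1}ⁿ` at every time and with total pointwise variation of all
components bounded by `σ`. -/
def Dmax (T : ℝ) (n : ℕ) (σ : ℕ) (U : Set (Fin n → ℝ)) (p : ℝ≥0∞) :
    Set (Lp (Fin n → ℝ) p (volume.restrict (Ioo (0:ℝ) T))) :=
  {u | ∃ v : ℝ → Fin n → ℝ,
        ((u : ℝ → Fin n → ℝ) =ᵐ[volume.restrict (Ioo (0:ℝ) T)] v) ∧
        (∀ t ∈ Ioo (0:ℝ) T, v t ∈ U) ∧
        (∑ j : Fin n, eVariationOn (fun s => v s j) (Ioo (0:ℝ) T)) ≤ (σ : ℝ≥0∞)}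

/-- The local averaging projection `Π(u)_i = (1/λ(I_i)) ∫_{I_i} u_{j_i} dλ`
for intervals `I_i = (a i, b i)`. -/
noncomputable def projM (T : ℝ) (n : ℕ) (p : ℝ≥0∞) (M : ℕ)
    (a b : Fin M → ℝ) (j : Fin M → Fin n)
    (u : Lp (Fin n → ℝ) p (volume.restrict (Ioo (0:ℝ) T))) : Fin M → ℝ :=
  fun i => (b i - a i)⁻¹ *
    ∫ t in Ioo (a i) (b i), (u : ℝ → Fin n → ℝ) t (j i)
      ∂(volume.restrict (Ioo (0:ℝ) T))

open Function

theorem BoundedVariationOn.aemeasurable_restrict {α : Type*} [LinearOrder α] [TopologicalSpace α]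
    [OrderClosedTopology α] [MeasurableSpace α] [BorelSpace α] {μ : Measure α}
    {f : α → ℝ} {s : Set α} (hs : MeasurableSet s) (hf : BoundedVariationOn f s) :
    AEMeasurable f (μ.restrict s) := by
  obtain ⟨g, h, hg, hh, rfl⟩ := hf.locallyBoundedVariationOn.exists_monotoneOn_sub_monotoneOn
  exact (aemeasurable_restrict_of_monotoneOn hs hg).sub (aemeasurable_restrict_of_monotoneOn hs hh)

theorem boundedVariationOn_of_sum_eVariationOn_ne_top {α ι : Type*} [LinearOrder α] [Fintype ι]
    {F : α → ι → ℝ} {s : Set α} (h : ∑ k, eVariationOn (fun t => F t k) s ≠ ∞) (k : ι) :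
    BoundedVariationOn (fun t => F t k) s :=
  ENNReal.sum_ne_top.1 h k (Finset.mem_univ k)

theorem memLp_restrict_of_boundedVariationOn {α ι : Type*} [LinearOrder α] [TopologicalSpace α]
    [OrderClosedTopology α] [MeasurableSpace α] [BorelSpace α] [Fintype ι]
    {μ : Measure α} {F : α → ι → ℝ} {s : Set α} [IsFiniteMeasure (μ.restrict s)]
    (hs : MeasurableSet s) (hF : ∀ k, BoundedVariationOn (fun t => F t k) s) {C : ℝ}
    (hC : ∀ t ∈ s, ‖F t‖ ≤ C) (p : ℝ≥0∞) : MemLp F p (μ.restrict s) :=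
  .of_bound (aemeasurable_pi_iff.2 fun k => (hF k).aemeasurable_restrict hs).aestronglyMeasurable
    C (ae_restrict_of_forall_mem hs hC)

theorem norm_le_one_of_forall_eq_zero_or_eq_one {ι : Type*} [Fintype ι] {x : ι → ℝ}
    (hx : ∀ k, x k = 0 ∨ x k = 1) : ‖x‖ ≤ 1 :=
  (pi_norm_le_iff_of_nonneg zero_le_one).2 fun k => by rcases hx k with h | h <;> simp [h]

theorem finite_setOf_forall_eq_zero_or_eq_one {ι : Type*} [Finite ι] :
    {x : ι → ℝ | ∀ k, x k = 0 ∨ x k = 1}.Finite :=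
  (Set.Finite.pi (t := fun _ => ({0, 1} : Set ℝ)) fun _ => by simp).subset
    fun x hx k _ => hx k

theorem Set.Finite.integral_mem_convexHull {α E : Type*} [MeasurableSpace α]
    [NormedAddCommGroup E] [NormedSpace ℝ E] [CompleteSpace E] {μ : Measure α}
    [IsProbabilityMeasure μ] {S : Set E} (hS : S.Finite) {f : α → E} (hf : ∀ᵐ x ∂μ, f x ∈ S)
    (hfi : Integrable f μ) : ∫ x, f x ∂μ ∈ convexHull ℝ S :=
  (convex_convexHull ℝ S).integral_mem (hS.isClosed_convexHull ℝ)
    (hf.mono fun _ hx => subset_convexHull ℝ S hx) hfi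

theorem mapsTo_affine_Ioo {a b : ℝ} (hab : a < b) :
    MapsTo (fun θ => a + (b - a) * θ) (Ioo 0 1) (Ioo a b) :=
  fun θ ⟨h₀, h₁⟩ => ⟨by nlinarith, by nlinarith⟩

theorem setIntegral_Ioo_zero_one_comp_affine (f : ℝ → ℝ) {a b : ℝ} (hab : a < b) :
    ∫ θ in Ioo (0:ℝ) 1, f (a + (b - a) * θ) = (b - a)⁻¹ * ∫ t in Ioo a b, f t := by
  have h := intervalIntegral.integral_comp_mul_add (a := 0) (b := 1) f (sub_ne_zero.2 hab.ne') a
  rw [mul_zero, zero_add, mul_one, sub_add_cancel, smul_eq_mul,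
    intervalIntegral.integral_of_le zero_le_one, intervalIntegral.integral_of_le hab.le,
    integral_Ioc_eq_integral_Ioo, integral_Ioc_eq_integral_Ioo] at h
  simpa only [add_comm] using h

theorem right_le_left_of_disjoint_Ioo {a₁ b₁ a₂ b₂ x₁ x₂ : ℝ}
    (h : Disjoint (Ioo a₁ b₁) (Ioo a₂ b₂)) (hx₁ : x₁ ∈ Ioo a₁ b₁) (hx₂ : x₂ ∈ Ioo a₂ b₂)
    (hx : x₁ ≤ x₂) : b₁ ≤ a₂ := by
  obtain ⟨ha₁, hb₁⟩ := hx₁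
  obtain ⟨ha₂, hb₂⟩ := hx₂
  rw [Set.Ioo_disjoint_Ioo] at h
  rcases min_le_iff.1 h with h | h <;> rcases le_max_iff.1 h with h | h <;> linarith

section Collapse

variable {ι : Type*} {a b s : ι → ℝ}

open Classical in
noncomputable def collapseIoo (a b s : ι → ℝ) (t : ℝ) : ℝ :=
  if h : ∃ i, t ∈ Ioo (a i) (b i) then s h.choose else t

theorem collapseIoo_of_mem (hdisj : Pairwise (Disjoint on fun i => Ioo (a i) (b i))) {i : ι}
    {t : ℝ} (ht : t ∈ Ioo (a i) (b i)) : collapseIoo a b s t = s i := by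
  have h : ∃ i, t ∈ Ioo (a i) (b i) := ⟨i, ht⟩
  rw [collapseIoo, dif_pos h]
  by_contra hne
  exact Set.disjoint_left.1 (hdisj fun he => hne (congrArg s he)) h.choose_spec ht

theorem collapseIoo_of_notMem {t : ℝ} (ht : ∀ i, t ∉ Ioo (a i) (b i)) :
    collapseIoo a b s t = t := by
  rw [collapseIoo, dif_neg (not_exists.2 ht)]

theorem monotone_collapseIoo (hdisj : Pairwise (Disjoint on fun i => Ioo (a i) (b i)))
    (hs : ∀ i, s i ∈ Ioo (a i) (b i)) : Monotone (collapseIoo a b s) := by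
  intro t t' htt'
  by_cases h : ∃ i, t ∈ Ioo (a i) (b i) <;> by_cases h' : ∃ k, t' ∈ Ioo (a k) (b k)
  · obtain ⟨i, hi⟩ := h
    obtain ⟨k, hk⟩ := h'
    rw [collapseIoo_of_mem hdisj hi, collapseIoo_of_mem hdisj hk]
    rcases eq_or_ne i k with rfl | hik
    · rfl
    · linarith [right_le_left_of_disjoint_Ioo (hdisj hik) hi hk htt', (hs i).2, (hs k).1]
  · obtain ⟨i, hi⟩ := h
    rw [collapseIoo_of_mem hdisj hi, collapseIoo_of_notMem (not_exists.1 h')]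
    have : b i ≤ t' := not_lt.1 fun hlt => h' ⟨i, hi.1.trans_le htt', hlt⟩
    linarith [(hs i).2]
  · obtain ⟨k, hk⟩ := h'
    rw [collapseIoo_of_notMem (not_exists.1 h), collapseIoo_of_mem hdisj hk]
    have : t ≤ a k := not_lt.1 fun hlt => h ⟨k, hlt, htt'.trans_lt hk.2⟩
    linarith [(hs k).1]
  · rwa [collapseIoo_of_notMem (not_exists.1 h), collapseIoo_of_notMem (not_exists.1 h')]

theorem mapsTo_collapseIoo (hdisj : Pairwise (Disjoint on fun i => Ioo (a i) (b i)))
    (hs : ∀ i, s i ∈ Ioo (a i) (b i)) {S : Set ℝ} (hsub : ∀ i, Ioo (a i) (b i) ⊆ S) :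
    MapsTo (collapseIoo a b s) S S := by
  intro t ht
  by_cases h : ∃ i, t ∈ Ioo (a i) (b i)
  · obtain ⟨i, hi⟩ := h
    rw [collapseIoo_of_mem hdisj hi]
    exact hsub i (hs i)
  · rwa [collapseIoo_of_notMem (not_exists.1 h)]

end Collapse

def DmaxConstOnIoo (T : ℝ) (n σ : ℕ) (U : Set (Fin n → ℝ)) (p : ℝ≥0∞) {M : ℕ}
    (a b : Fin M → ℝ) : Set (Lp (Fin n → ℝ) p (volume.restrict (Ioo (0:ℝ) T))) :=
  {u ∈ Dmax T n σ U p | ∀ i, ∃ w ∈ U,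
    ∀ᵐ t ∂(volume.restrict (Ioo (a i) (b i))), (u : ℝ → Fin n → ℝ) t = w}

section Controls

variable {T : ℝ} {n σ : ℕ} {U : Set (Fin n → ℝ)} {p : ℝ≥0∞} {M : ℕ} {a b : Fin M → ℝ}
  {j : Fin M → Fin n}

theorem projM_apply_of_ae_eq {u : Lp (Fin n → ℝ) p (volume.restrict (Ioo (0:ℝ) T))}
    {v : ℝ → Fin n → ℝ} {i : Fin M} (hsub : Ioo (a i) (b i) ⊆ Ioo 0 T)
    (huv : (u : ℝ → Fin n → ℝ) =ᵐ[volume.restrict (Ioo (a i) (b i))] v) :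
    projM T n p M a b j u i = (b i - a i)⁻¹ * ∫ t in Ioo (a i) (b i), v t (j i) := by
  rw [projM, Measure.restrict_restrict measurableSet_Ioo, inter_eq_self_of_subset_left hsub]
  exact congrArg _ (integral_congr_ae (huv.mono fun t ht => congrFun ht (j i)))

theorem projM_apply_of_ae_eq_const {u : Lp (Fin n → ℝ) p (volume.restrict (Ioo (0:ℝ) T))}
    {w : Fin n → ℝ} {i : Fin M} (hab : a i < b i) (hsub : Ioo (a i) (b i) ⊆ Ioo 0 T)
    (hw : ∀ᵐ t ∂(volume.restrict (Ioo (a i) (b i))), (u : ℝ → Fin n → ℝ) t = w) :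
    projM T n p M a b j u i = w (j i) := by
  rw [projM_apply_of_ae_eq (v := fun _ => w) hsub hw, setIntegral_const,
    Real.volume_real_Ioo_of_le hab.le, smul_eq_mul, inv_mul_cancel_left₀ (sub_ne_zero.2 hab.ne')]

theorem exists_mem_Dmax_ae_eq (hU : ∀ w ∈ U, ∀ k, w k = 0 ∨ w k = 1) {v : ℝ → Fin n → ℝ}
    (hv_mem : ∀ t ∈ Ioo 0 T, v t ∈ U)
    (hv_var : ∑ k, eVariationOn (fun t => v t k) (Ioo 0 T) ≤ σ) :
    ∃ u ∈ Dmax T n σ U p, (u : ℝ → Fin n → ℝ) =ᵐ[volume.restrict (Ioo 0 T)] v := by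
  have hv : MemLp v p (volume.restrict (Ioo 0 T)) :=
    memLp_restrict_of_boundedVariationOn measurableSet_Ioo
      (boundedVariationOn_of_sum_eVariationOn_ne_top (hv_var.trans_lt (by simp)).ne)
      (fun t ht => norm_le_one_of_forall_eq_zero_or_eq_one (hU _ (hv_mem t ht))) p
  exact ⟨hv.toLp v, ⟨v, hv.coeFn_toLp, hv_mem, hv_var⟩, hv.coeFn_toLp⟩

theorem exists_mem_Dmax_ae_eq_sample (hU : ∀ w ∈ U, ∀ k, w k = 0 ∨ w k = 1)
    {v : ℝ → Fin n → ℝ} (hv_mem : ∀ t ∈ Ioo 0 T, v t ∈ U)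
    (hv_var : ∑ k, eVariationOn (fun t => v t k) (Ioo 0 T) ≤ σ)
    (hsub : ∀ i, Ioo (a i) (b i) ⊆ Ioo 0 T)
    (hdisj : Pairwise (Disjoint on fun i => Ioo (a i) (b i))) {s : Fin M → ℝ}
    (hs : ∀ i, s i ∈ Ioo (a i) (b i)) :
    ∃ u ∈ Dmax T n σ U p, ∀ i, ∀ᵐ t ∂(volume.restrict (Ioo (a i) (b i))),
      (u : ℝ → Fin n → ℝ) t = v (s i) := by
  have hmaps := mapsTo_collapseIoo hdisj hs hsub
  obtain ⟨u, hu, huv⟩ := exists_mem_Dmax_ae_eq (p := p) hU (v := v ∘ collapseIoo a b s)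
    (fun t ht => hv_mem _ (hmaps ht))
    ((Finset.sum_le_sum fun k _ => eVariationOn.comp_le_of_monotoneOn (fun t => v t k) _
      ((monotone_collapseIoo hdisj hs).monotoneOn _) hmaps).trans hv_var)
  refine ⟨u, hu, fun i => ?_⟩
  filter_upwards [huv.filter_mono (ae_mono (Measure.restrict_mono (hsub i) le_rfl)),
    ae_restrict_mem measurableSet_Ioo] with t hut ht
  rw [hut, comp_apply, collapseIoo_of_mem hdisj ht]

end Controls

def affineSample {ι κ : Type*} (a b : ι → ℝ) (j : ι → κ) (v : ℝ → κ → ℝ) (θ : ℝ) : ι → ℝ :=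
  fun i => v (a i + (b i - a i) * θ) (j i)

section Sample

variable {T : ℝ} {n σ : ℕ} {U : Set (Fin n → ℝ)} {p : ℝ≥0∞} {M : ℕ} {a b : Fin M → ℝ}
  {j : Fin M → Fin n} {v : ℝ → Fin n → ℝ}

theorem affineSample_mem_projM_image (hU : ∀ w ∈ U, ∀ k, w k = 0 ∨ w k = 1)
    (hv_mem : ∀ t ∈ Ioo 0 T, v t ∈ U)
    (hv_var : ∑ k, eVariationOn (fun t => v t k) (Ioo 0 T) ≤ σ) (hab : ∀ i, a i < b i)
    (hsub : ∀ i, Ioo (a i) (b i) ⊆ Ioo 0 T)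
    (hdisj : Pairwise (Disjoint on fun i => Ioo (a i) (b i))) {θ : ℝ} (hθ : θ ∈ Ioo (0:ℝ) 1) :
    affineSample a b j v θ ∈ projM T n p M a b j '' DmaxConstOnIoo T n σ U p a b := by
  have hs i : a i + (b i - a i) * θ ∈ Ioo (a i) (b i) := mapsTo_affine_Ioo (hab i) hθ
  obtain ⟨u, hu, hconst⟩ := exists_mem_Dmax_ae_eq_sample (p := p) hU hv_mem hv_var hsub hdisj hs
  exact ⟨u, ⟨hu, fun i => ⟨_, hv_mem _ (hsub i (hs i)), hconst i⟩⟩,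
    funext fun i => projM_apply_of_ae_eq_const (hab i) (hsub i) (hconst i)⟩

theorem integrable_affineSample (hU : ∀ w ∈ U, ∀ k, w k = 0 ∨ w k = 1)
    (hv_mem : ∀ t ∈ Ioo 0 T, v t ∈ U)
    (hv_var : ∑ k, eVariationOn (fun t => v t k) (Ioo 0 T) ≤ σ) (hab : ∀ i, a i < b i)
    (hsub : ∀ i, Ioo (a i) (b i) ⊆ Ioo 0 T) :
    Integrable (affineSample a b j v) (volume.restrict (Ioo (0:ℝ) 1)) := by
  have hv_bv := boundedVariationOn_of_sum_eVariationOn_ne_top (hv_var.trans_lt (by simp)).ne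
  refine memLp_one_iff_integrable.1 <| memLp_restrict_of_boundedVariationOn measurableSet_Ioo
    (fun i => ne_top_of_le_ne_top (hv_bv (j i)) ?_)
    (fun θ hθ => norm_le_one_of_forall_eq_zero_or_eq_one fun i =>
      hU _ (hv_mem _ (hsub i (mapsTo_affine_Ioo (hab i) hθ))) (j i)) 1
  have hmono : Monotone fun θ => a i + (b i - a i) * θ := fun _ _ hθ =>
    add_le_add_right (mul_le_mul_of_nonneg_left hθ (sub_nonneg.2 (hab i).le)) _
  exact eVariationOn.comp_le_of_monotoneOn (fun t => v t (j i)) _ (hmono.monotoneOn _)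
    ((mapsTo_affine_Ioo (hab i)).mono_right (hsub i))

theorem projM_eq_integral_affineSample
    {u : Lp (Fin n → ℝ) p (volume.restrict (Ioo (0:ℝ) T))}
    (huv : (u : ℝ → Fin n → ℝ) =ᵐ[volume.restrict (Ioo 0 T)] v)
    (hU : ∀ w ∈ U, ∀ k, w k = 0 ∨ w k = 1) (hv_mem : ∀ t ∈ Ioo 0 T, v t ∈ U)
    (hv_var : ∑ k, eVariationOn (fun t => v t k) (Ioo 0 T) ≤ σ) (hab : ∀ i, a i < b i)
    (hsub : ∀ i, Ioo (a i) (b i) ⊆ Ioo 0 T) :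
    projM T n p M a b j u = ∫ θ in Ioo (0:ℝ) 1, affineSample a b j v θ := by
  funext i
  rw [eval_integral (integrable_affineSample hU hv_mem hv_var hab hsub).eval]
  exact (projM_apply_of_ae_eq (hsub i) (huv.filter_mono (ae_mono
    (Measure.restrict_mono (hsub i) le_rfl)))).trans
    (setIntegral_Ioo_zero_one_comp_affine (fun t => v t (j i)) (hab i)).symm

end Sample

theorem stmt_12_general
    (T : ℝ) (n : ℕ) (σ : ℕ)
    (U : Set (Fin n → ℝ)) (hU : ∀ w ∈ U, ∀ j, w j = 0 ∨ w j = 1)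
    (p : ℝ≥0∞)
    (M : ℕ) (a b : Fin M → ℝ) (hab : ∀ i, a i < b i)
    (hsub : ∀ i, Ioo (a i) (b i) ⊆ Ioo (0:ℝ) T)
    (hdisj : ∀ i i' : Fin M, i ≠ i' →
      Disjoint (Ioo (a i) (b i)) (Ioo (a i') (b i')))
    (j : Fin M → Fin n) :
    convexHull ℝ (projM T n p M a b j '' Dmax T n σ U p) =
      convexHull ℝ (projM T n p M a b j ''
        {u ∈ Dmax T n σ U p | ∀ i : Fin M, ∃ w ∈ U,
          ∀ᵐ t ∂(volume.restrict (Ioo (a i) (b i))),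
            (u : ℝ → Fin n → ℝ) t = w}) ∧
    (projM T n p M a b j ''
        {u ∈ Dmax T n σ U p | ∀ i : Fin M, ∃ w ∈ U,
          ∀ᵐ t ∂(volume.restrict (Ioo (a i) (b i))),
            (u : ℝ → Fin n → ℝ) t = w}) ⊆
      {x : Fin M → ℝ | ∀ i, x i = 0 ∨ x i = 1} := by
  have hdisj' : Pairwise (Disjoint on fun i => Ioo (a i) (b i)) := fun i i' h => hdisj i i' h
  have hK01 : projM T n p M a b j '' DmaxConstOnIoo T n σ U p a b ⊆
      {x : Fin M → ℝ | ∀ i, x i = 0 ∨ x i = 1} := by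
    rintro _ ⟨u, ⟨-, hu⟩, rfl⟩ i
    obtain ⟨w, hwU, hw⟩ := hu i
    rw [projM_apply_of_ae_eq_const (hab i) (hsub i) hw]
    exact hU w hwU (j i)
  refine ⟨(convexHull_min ?_ (convex_convexHull ℝ _)).antisymm
    (convexHull_mono (image_mono (sep_subset _ _))), hK01⟩
  rintro _ ⟨u, ⟨v, huv, hv_mem, hv_var⟩, rfl⟩
  have : IsProbabilityMeasure (volume.restrict (Ioo (0:ℝ) 1)) := ⟨by simp⟩
  rw [projM_eq_integral_affineSample huv hU hv_mem hv_var hab hsub]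
  exact (finite_setOf_forall_eq_zero_or_eq_one.subset hK01).integral_mem_convexHull
    (ae_restrict_of_forall_mem measurableSet_Ioo fun θ hθ =>
      affineSample_mem_projM_image hU hv_mem hv_var hab hsub hdisj' hθ)
    (integrable_affineSample hU hv_mem hv_var hab hsub)

/-- Theorem 3.6: `C_{D,Π} = conv K` where `K` consists of the
projections of those feasible controls that are constant (with value in `U`)
on each interval `I_i`; in particular `K ⊆ {0,1}^M`, so `C_{D,Π}` is a
0/1-polytope. -/
theorem stmt_12
    (T : ℝ) (hT : 0 < T) (n : ℕ) (σ : ℕ)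
    (U : Set (Fin n → ℝ)) (hU : ∀ w ∈ U, ∀ j, w j = 0 ∨ w j = 1)
    (p : ℝ≥0∞) [Fact (1 ≤ p)] (hp : p ≠ ⊤)
    (M : ℕ) (a b : Fin M → ℝ) (hab : ∀ i, a i < b i)
    (hsub : ∀ i, Ioo (a i) (b i) ⊆ Ioo (0:ℝ) T)
    (hdisj : ∀ i i' : Fin M, i ≠ i' →
      Disjoint (Ioo (a i) (b i)) (Ioo (a i') (b i')))
    (j : Fin M → Fin n) :
    convexHull ℝ (projM T n p M a b j '' Dmax T n σ U p) =
      convexHull ℝ (projM T n p M a b j ''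
        {u ∈ Dmax T n σ U p | ∀ i : Fin M, ∃ w ∈ U,
          ∀ᵐ t ∂(volume.restrict (Ioo (a i) (b i))),
            (u : ℝ → Fin n → ℝ) t = w}) ∧
    (projM T n p M a b j ''
        {u ∈ Dmax T n σ U p | ∀ i : Fin M, ∃ w ∈ U,
          ∀ᵐ t ∂(volume.restrict (Ioo (a i) (b i))),
            (u : ℝ → Fin n → ℝ) t = w}) ⊆
      {x : Fin M → ℝ | ∀ i, x i = 0 ∨ x i = 1} :=
  stmt_12_general T n σ U hU p M a b hab hsub hdisj j
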